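/- Let N be a (2n−1)-dimensional Milnor fillable manifold (the link of a normal isolated complex-analytic singularity of dimension n), n ≥ 2. Then for any i₁,...,i_k ∈ {1,...,n−1} with i₁+⋯+i_k ≥ n, the cup product map H^{i₁}(N;ℚ) ⊗ ⋯ ⊗ H^{i_k}(N;ℚ) → H^{i₁+⋯+i_k}(N;ℚ) vanishes identically. -/

import Mathlib

/-!
Lift each factor `x l` to `W` through the restriction map `b`, which is onto in degrees `≤ n - 1`.
The product of the lifts has degree `∑ l, i l ≥ n`; below `2n` the restriction kills that
degree, and from `2n` on the cohomology of `N` itself vanishes.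
-/

section GradedProduct

variable {ι A σ : Type*} [AddCommMonoid ι] [Monoid A] [SetLike σ A]
  (𝒜 : ι → σ) [SetLike.GradedMonoid 𝒜]

theorem SetLike.prod_ofFn_mem_graded_sum {k : ℕ} (i : Fin k → ι) (x : Fin k → A)
    (hx : ∀ l, x l ∈ 𝒜 (i l)) : (List.ofFn x).prod ∈ 𝒜 (∑ l, i l) := by
  simpa only [List.sum_ofFn] using SetLike.list_prod_ofFn_mem_graded i x hx

theorem SetLike.prod_ofFn_eq_zero_of_lift {B : Type*} [MonoidWithZero B] (f : A →* B)
    {k : ℕ} (i : Fin k → ι) (x : Fin k → B) (hlift : ∀ l, ∃ a ∈ 𝒜 (i l), f a = x l)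
    (hvan : ∀ a ∈ 𝒜 (∑ l, i l), f a = 0) : (List.ofFn x).prod = 0 := by
  choose a ha hfa using hlift
  have hx : x = f ∘ a := funext fun l => (hfa l).symm
  rw [hx, ← List.map_ofFn, ← map_list_prod]
  exact hvan _ (SetLike.prod_ofFn_mem_graded_sum 𝒜 i a ha)

end GradedProduct

theorem statement9_general
    (n : ℕ)
    (HW HN : Type) [Ring HW] [Ring HN] [Algebra ℚ HW] [Algebra ℚ HN]
    (𝒲 : ℕ → Submodule ℚ HW) (𝒩 : ℕ → Submodule ℚ HN)
    [GradedAlgebra 𝒲] [GradedAlgebra 𝒩]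
    (b : HW →ₐ[ℚ] HN)
    (hsurj : ∀ j, j ≤ n - 1 → ∀ y ∈ 𝒩 j, ∃ x ∈ 𝒲 j, b x = y)
    (hvan : ∀ j, n ≤ j → j ≤ 2 * n - 1 → ∀ x ∈ 𝒲 j, b x = 0)
    (hNtop : ∀ j, 2 * n ≤ j → 𝒩 j = ⊥)
    (k : ℕ) (i : Fin k → ℕ)
    (hiu : ∀ l, i l ≤ n - 1)
    (hsum : n ≤ ∑ l, i l)
    (x : Fin k → HN) (hx : ∀ l, x l ∈ 𝒩 (i l)) :
    (List.ofFn x).prod = 0 := by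
  rcases le_or_gt (2 * n) (∑ l, i l) with htop | hlow
  · simpa only [hNtop _ htop, Submodule.mem_bot] using SetLike.prod_ofFn_mem_graded_sum 𝒩 i x hx
  · exact SetLike.prod_ofFn_eq_zero_of_lift 𝒲 b.toMonoidHom i x
      (fun l => hsurj _ (hiu l) _ (hx l)) (hvan _ hsum (by omega))

/-- Durfee–Hain theorem.
Let `N` be a `(2n-1)`-dimensional Milnor fillable manifold (the link of a normal isolated
complex-analytic singularity of dimension `n`), `n ≥ 2`.  Following the context, Milnor
fillability is assumed in the form: `N` is the boundary of a compact oriented `2n`-manifold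
`W` (a divisorial resolution) satisfying the Goresky–MacPherson property, namely the
degree-preserving restriction homomorphism `b : H^*(W;ℚ) → H^*(N;ℚ)` is surjective in each
degree `i ≤ n-1` and zero in each degree `i` with `n ≤ i ≤ 2n-1` (and `H^j(N;ℚ) = 0` for
`j ≥ 2n`, as `N` is a closed `(2n-1)`-manifold).  Then for any `i₁,…,i_k ∈ {1,…,n-1}` with
`i₁+⋯+i_k ≥ n`, the cup product map
`H^{i₁}(N;ℚ) ⊗ ⋯ ⊗ H^{i_k}(N;ℚ) → H^{i₁+⋯+i_k}(N;ℚ)` vanishes identically. -/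
theorem statement9
    (n : ℕ) (hn : 2 ≤ n)
    (HW HN : Type) [Ring HW] [Ring HN] [Algebra ℚ HW] [Algebra ℚ HN]
    (𝒲 : ℕ → Submodule ℚ HW) (𝒩 : ℕ → Submodule ℚ HN)
    [GradedAlgebra 𝒲] [GradedAlgebra 𝒩]
    (b : HW →ₐ[ℚ] HN)
    (hb : ∀ j, ∀ x ∈ 𝒲 j, b x ∈ 𝒩 j)
    (hsurj : ∀ j, j ≤ n - 1 → ∀ y ∈ 𝒩 j, ∃ x ∈ 𝒲 j, b x = y)
    (hvan : ∀ j, n ≤ j → j ≤ 2 * n - 1 → ∀ x ∈ 𝒲 j, b x = 0)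
    (hNtop : ∀ j, 2 * n ≤ j → 𝒩 j = ⊥)
    (k : ℕ) (i : Fin k → ℕ)
    (hil : ∀ l, 1 ≤ i l) (hiu : ∀ l, i l ≤ n - 1)
    (hsum : n ≤ ∑ l, i l)
    (x : Fin k → HN) (hx : ∀ l, x l ∈ 𝒩 (i l)) :
    (List.ofFn x).prod = 0 :=
  statement9_general n HW HN 𝒲 𝒩 b hsurj hvan hNtop k i hiu hsum x hx
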